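/- arXiv:2210.05523 — 2 statements merged into one kernel-verified Lean document; each statement's English description precedes it below -/
import Mathlib

section
/- Let Ω ⊂ ℝ^d be open and bounded, Ω⁻ open with closure(Ω⁻) ⊆ Ω, Ω⁺ = Ω \ closure(Ω⁻), and Γ = frontier(Ω⁻). Let n : Γ → ℝ^d be a given vector field, f : Ω → ℝ a function whose one-sided limits from Ω⁻ and Ω⁺ exist at every point of Γ, γ, ρ : Γ → ℝ, and u_b : ∂Ω → ℝ. Suppose V : ℝ^d → ℝ is twice continuously differentiable and satisfies, for every x ∈ Γ: V(x) = −γ(x), n(x)·∇V(x) = −ρ(x), and ΔV(x) = −[[f]](x). Suppose w : Ω → ℝ is twice continuously differentiable on Ω⁻ ∪ Ω⁺, that w, ∇w extend continuously to each point of Γ with equal one-sided limits from Ω⁻ and Ω⁺ (i.e., [[w]] = 0 and [[∇w]] = 0 on Γ), that Δw = f − ΔV on Ω⁻ and Δw = f on Ω⁺, and that w extends continuously to ∂Ω with boundary values u_b. Then u = w + V·1_{Ω⁻} satisfies: (i) Δu = f on Ω⁻ ∪ Ω⁺; (ii) for every x ∈ Γ, [[u]](x) = γ(x) and [[n·∇u]](x)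 = ρ(x); and (iii) u extends continuously to ∂Ω with boundary values u_b. -/
open Filter Set
open scoped Topology RealInnerProductSpace

/-- The Laplacian of `f : ℝ^d → ℝ` at `x`: the sum of the pure second partial derivatives. -/
noncomputable def lap {d : ℕ} (f : EuclideanSpace ℝ (Fin d) → ℝ)
    (x : EuclideanSpace ℝ (Fin d)) : ℝ :=
  ∑ i : Fin d,
    fderiv ℝ (fun y => fderiv ℝ f y (EuclideanSpace.single i 1)) x (EuclideanSpace.single i 1)

/-!
Near each point of `Ω⁻` the function `u = w + V·1_{Ω⁻}` coincides with `w + V`, and near each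
point of `Ω⁺` with `w`; this gives `Δu = f`. Approaching `Γ` from `Ω⁺` one sees only `w`, from
`Ω⁻` one sees `w + V`; since `w` and `∇w` do not jump and `V` is `C¹` across `Γ`, the jumps of `u`
and `n·∇u` are `-V = γ` and `-n·∇V = ρ`. Near `∂Ω` we are away from `closure Ω⁻`, so `u = w` there.
-/

section Gradient

variable {𝕜 F : Type*} [RCLike 𝕜] [NormedAddCommGroup F] [InnerProductSpace 𝕜 F] [CompleteSpace F]
  {f g : F → 𝕜} {x : F}

theorem gradient_fun_add (hf : DifferentiableAt 𝕜 f x) (hg : DifferentiableAt 𝕜 g x) :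
    gradient (fun y => f y + g y) x = gradient f x + gradient g x := by
  simp [gradient, fderiv_fun_add hf hg]

end Gradient

theorem ContDiff.continuous_gradient {F : Type*} [NormedAddCommGroup F] [InnerProductSpace ℝ F]
    [CompleteSpace F] {f : F → ℝ} {n : WithTop ℕ∞} (hf : ContDiff ℝ n f) (hn : n ≠ 0) :
    Continuous (gradient f) :=
  (InnerProductSpace.toDual ℝ F).symm.continuous.comp (hf.continuous_fderiv hn)

theorem ContDiffAt.differentiableAt_fderiv_apply {E F : Type*} [NormedAddCommGroup E]
    [NormedSpace ℝ E] [NormedAddCommGroup F] [NormedSpace ℝ F] {f : E → F} {x : E}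
    (hf : ContDiffAt ℝ 2 f x) (v : E) :
    DifferentiableAt ℝ (fun y => fderiv ℝ f y v) x :=
  ((hf.fderiv_right (m := 1) (by norm_num)).differentiableAt (by norm_num)).clm_apply
    (differentiableAt_const v)

section Laplacian

variable {d : ℕ} {f g : EuclideanSpace ℝ (Fin d) → ℝ} {x : EuclideanSpace ℝ (Fin d)}

theorem Filter.EventuallyEq.lap_eq (h : f =ᶠ[𝓝 x] g) : lap f x = lap g x := by
  refine Finset.sum_congr rfl fun i _ => ?_
  have hderiv : (fun y => fderiv ℝ f y (EuclideanSpace.single i 1))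
      =ᶠ[𝓝 x] fun y => fderiv ℝ g y (EuclideanSpace.single i 1) := by
    filter_upwards [h.eventually_nhds] with y hy
    rw [Filter.EventuallyEq.fderiv_eq hy]
  rw [hderiv.fderiv_eq]

theorem lap_fun_add (hf : ContDiffAt ℝ 2 f x) (hg : ContDiffAt ℝ 2 g x) :
    lap (fun y => f y + g y) x = lap f x + lap g x := by
  rw [lap, lap, lap, ← Finset.sum_add_distrib]
  refine Finset.sum_congr rfl fun i _ => ?_
  set v : EuclideanSpace ℝ (Fin d) := EuclideanSpace.single i 1
  have hderiv : (fun y => fderiv ℝ (fun z => f z + g z) y v)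
      =ᶠ[𝓝 x] fun y => fderiv ℝ f y v + fderiv ℝ g y v := by
    filter_upwards [hf.eventually (by norm_num), hg.eventually (by norm_num)] with y hfy hgy
    rw [fderiv_fun_add (hfy.differentiableAt (by norm_num)) (hgy.differentiableAt (by norm_num))]
    rfl
  rw [hderiv.fderiv_eq, fderiv_fun_add (hf.differentiableAt_fderiv_apply v)
    (hg.differentiableAt_fderiv_apply v)]
  rfl

end Laplacian

section Indicator

variable {X M : Type*} [TopologicalSpace X] [AddZeroClass M] {s t : Set X} {w V : X → M} {x : X}

theorem add_indicator_eventuallyEq_of_mem (hs : IsOpen s) (hx : x ∈ s) :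
    (fun y => w y + s.indicator V y) =ᶠ[𝓝 x] fun y => w y + V y := by
  filter_upwards [hs.mem_nhds hx] with y hy
  rw [indicator_of_mem hy]

theorem add_indicator_eventuallyEq_of_notMem_closure (hx : x ∉ closure s) :
    (fun y => w y + s.indicator V y) =ᶠ[𝓝 x] w := by
  filter_upwards [isClosed_closure.isOpen_compl.mem_nhds hx] with y hy
  rw [indicator_of_notMem fun h => hy (subset_closure h), add_zero]

variable [TopologicalSpace M] {a : M}

theorem Filter.Tendsto.add_indicator_nhdsWithin [ContinuousAdd M]
    (hw : Tendsto w (𝓝[s] x) (𝓝 a)) (hV : ContinuousAt V x) :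
    Tendsto (fun y => w y + s.indicator V y) (𝓝[s] x) (𝓝 (a + V x)) :=
  (hw.add (hV.tendsto.mono_left nhdsWithin_le_nhds)).congr' <|
    eventuallyEq_nhdsWithin_of_eqOn fun y hy => by rw [indicator_of_mem hy]

theorem Filter.Tendsto.add_indicator_nhdsWithin_of_disjoint (hts : Disjoint t s)
    (hw : Tendsto w (𝓝[t] x) (𝓝 a)) :
    Tendsto (fun y => w y + s.indicator V y) (𝓝[t] x) (𝓝 a) :=
  hw.congr' <| eventuallyEq_nhdsWithin_of_eqOn fun y hy => by
    rw [indicator_of_notMem (hts.notMem_of_mem_left hy), add_zero]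

end Indicator

section GradientIndicator

variable {F : Type*} [NormedAddCommGroup F] [InnerProductSpace ℝ F] [CompleteSpace F]
  {s t : Set F} {w V : F → ℝ} {x : F} {g : F}

theorem tendsto_gradient_add_indicator_nhdsWithin (hs : IsOpen s)
    (hw : DifferentiableOn ℝ w s) (hVd : DifferentiableOn ℝ V s) (hVc : ContinuousAt (gradient V) x)
    (hgw : Tendsto (gradient w) (𝓝[s] x) (𝓝 g)) :
    Tendsto (gradient fun y => w y + s.indicator V y) (𝓝[s] x) (𝓝 (g + gradient V x)) :=
  (hgw.add (hVc.tendsto.mono_left nhdsWithin_le_nhds)).congr' <|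
    eventuallyEq_nhdsWithin_of_eqOn fun y hy => by
      rw [(add_indicator_eventuallyEq_of_mem hs hy).gradient_eq,
        gradient_fun_add (hw.differentiableAt (hs.mem_nhds hy))
          (hVd.differentiableAt (hs.mem_nhds hy))]

theorem tendsto_gradient_add_indicator_nhdsWithin_of_subset_compl_closure
    (ht : t ⊆ (closure s)ᶜ) (hgw : Tendsto (gradient w) (𝓝[t] x) (𝓝 g)) :
    Tendsto (gradient fun y => w y + s.indicator V y) (𝓝[t] x) (𝓝 g) :=
  hgw.congr' <| eventuallyEq_nhdsWithin_of_eqOn fun _ hy =>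
    (add_indicator_eventuallyEq_of_notMem_closure (ht hy)).gradient_eq.symm

end GradientIndicator

theorem hybrid_method_correctness_general {d : ℕ}
    (Ω Ωm Ωp Γ : Set (EuclideanSpace ℝ (Fin d)))
    (hΩ : IsOpen Ω)
    (hΩm : IsOpen Ωm) (hΩmΩ : closure Ωm ⊆ Ω)
    (hΩp : Ωp = Ω \ closure Ωm)
    (n : EuclideanSpace ℝ (Fin d) → EuclideanSpace ℝ (Fin d))
    (f γ ρ u_b : EuclideanSpace ℝ (Fin d) → ℝ)
    -- the singular part `V`:
    (V : EuclideanSpace ℝ (Fin d) → ℝ) (hV : ContDiff ℝ 2 V)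
    (hVγ : ∀ x ∈ Γ, V x = -γ x)
    (hVρ : ∀ x ∈ Γ, ⟪n x, gradient V x⟫ = -ρ x)
    -- the regular part `w`:
    (w : EuclideanSpace ℝ (Fin d) → ℝ)
    (hw : ContDiffOn ℝ 2 w (Ωm ∪ Ωp))
    (hwval : ∀ x ∈ Γ, ∃ wx : ℝ,
      Tendsto w (𝓝[Ωp] x) (𝓝 wx) ∧ Tendsto w (𝓝[Ωm] x) (𝓝 wx))
    (hwgrad : ∀ x ∈ Γ, ∃ gx : EuclideanSpace ℝ (Fin d),
      Tendsto (gradient w) (𝓝[Ωp] x) (𝓝 gx) ∧ Tendsto (gradient w) (𝓝[Ωm] x) (𝓝 gx))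
    (hwm : ∀ x ∈ Ωm, lap w x = f x - lap V x)
    (hwp : ∀ x ∈ Ωp, lap w x = f x)
    (hwb : ∀ x ∈ frontier Ω, Tendsto w (𝓝[Ω] x) (𝓝 (u_b x)))
    -- the full solution `u`:
    (u : EuclideanSpace ℝ (Fin d) → ℝ)
    (hu : u = fun x => w x + Set.indicator Ωm V x) :
    -- (i) `Δu = f` on `Ω⁻ ∪ Ω⁺`
    (∀ x ∈ Ωm ∪ Ωp, lap u x = f x) ∧
    -- (ii) `[[u]] = γ` and `[[n·∇u]] = ρ` on `Γ`
    (∀ x ∈ Γ, ∃ up um : ℝ,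
      Tendsto u (𝓝[Ωp] x) (𝓝 up) ∧ Tendsto u (𝓝[Ωm] x) (𝓝 um) ∧ up - um = γ x) ∧
    (∀ x ∈ Γ, ∃ ap am : ℝ,
      Tendsto (fun y => ⟪n x, gradient u y⟫) (𝓝[Ωp] x) (𝓝 ap) ∧
      Tendsto (fun y => ⟪n x, gradient u y⟫) (𝓝[Ωm] x) (𝓝 am) ∧ ap - am = ρ x) ∧
    -- (iii) `u = u_b` on `∂Ω`
    (∀ x ∈ frontier Ω, Tendsto u (𝓝[Ω] x) (𝓝 (u_b x))) := by
  subst hu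
  have hΩp_compl : Ωp ⊆ (closure Ωm)ᶜ := hΩp ▸ fun y hy => hy.2
  have hΩp_disj : Disjoint Ωp Ωm :=
    disjoint_compl_left.mono_left (hΩp_compl.trans (compl_subset_compl.2 subset_closure))
  have hwm_smooth : ContDiffOn ℝ 2 w Ωm := hw.mono subset_union_left
  refine ⟨?_, fun x hx => ?_, fun x hx => ?_, fun x hx => ?_⟩
  · rintro x (hx | hx)
    · rw [(add_indicator_eventuallyEq_of_mem hΩm hx).lap_eq,
        lap_fun_add (hwm_smooth.contDiffAt (hΩm.mem_nhds hx)) hV.contDiffAt, hwm x hx,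
        sub_add_cancel]
    · rw [(add_indicator_eventuallyEq_of_notMem_closure (hΩp_compl hx)).lap_eq, hwp x hx]
  · obtain ⟨wx, hwP, hwM⟩ := hwval x hx
    exact ⟨wx, wx + V x, hwP.add_indicator_nhdsWithin_of_disjoint hΩp_disj,
      hwM.add_indicator_nhdsWithin hV.continuous.continuousAt, by rw [hVγ x hx]; ring⟩
  · obtain ⟨gx, hgP, hgM⟩ := hwgrad x hx
    refine ⟨⟪n x, gx⟫, ⟪n x, gx + gradient V x⟫,
      tendsto_const_nhds.inner
        (tendsto_gradient_add_indicator_nhdsWithin_of_subset_compl_closure hΩp_compl hgP),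
      tendsto_const_nhds.inner (tendsto_gradient_add_indicator_nhdsWithin hΩm
        (hwm_smooth.differentiableOn (by norm_num)) (hV.differentiable (by norm_num)).differentiableOn
        ((hV.continuous_gradient (by norm_num)).continuousAt) hgM),
      by rw [inner_add_right, hVρ x hx]; ring⟩
  · have hx' : x ∉ closure Ωm := fun h =>
      (disjoint_frontier_iff_isOpen.mpr hΩ).le_bot ⟨hx, hΩmΩ h⟩
    exact (hwb x hx).congr' <|
      ((add_indicator_eventuallyEq_of_notMem_closure hx').filter_mono nhdsWithin_le_nhds).symm

/-- **Correctness of the hybrid neural-network/finite-difference decomposition.**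
If the singular part `V` (a `C²` function) satisfies `V = -γ`, `n·∇V = -ρ`, `ΔV = -[[f]]`
on the interface `Γ`, and the regular part `w` is `C²` on `Ω⁻ ∪ Ω⁺`, has matching one-sided
limits of its value and gradient across `Γ`, satisfies `Δw = f - ΔV` in `Ω⁻`, `Δw = f` in
`Ω⁺`, and attains the boundary values `u_b` on `∂Ω`, then `u = w + V · 1_{Ω⁻}` solves the
Poisson interface problem: `Δu = f` in `Ω⁻ ∪ Ω⁺`, `[[u]] = γ` and `[[n·∇u]] = ρ` on `Γ`,
and `u = u_b` on `∂Ω`. -/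
theorem hybrid_method_correctness {d : ℕ}
    (Ω Ωm Ωp Γ : Set (EuclideanSpace ℝ (Fin d)))
    (hΩ : IsOpen Ω) (hΩbd : Bornology.IsBounded Ω)
    (hΩm : IsOpen Ωm) (hΩmΩ : closure Ωm ⊆ Ω)
    (hΩp : Ωp = Ω \ closure Ωm) (hΓ : Γ = frontier Ωm)
    (n : EuclideanSpace ℝ (Fin d) → EuclideanSpace ℝ (Fin d))
    (f γ ρ u_b : EuclideanSpace ℝ (Fin d) → ℝ)
    -- one-sided limits of `f` at every point of the interface:
    (fP fM : EuclideanSpace ℝ (Fin d) → ℝ)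
    (hfP : ∀ x ∈ Γ, Tendsto f (𝓝[Ωp] x) (𝓝 (fP x)))
    (hfM : ∀ x ∈ Γ, Tendsto f (𝓝[Ωm] x) (𝓝 (fM x)))
    -- the singular part `V`:
    (V : EuclideanSpace ℝ (Fin d) → ℝ) (hV : ContDiff ℝ 2 V)
    (hVγ : ∀ x ∈ Γ, V x = -γ x)
    (hVρ : ∀ x ∈ Γ, ⟪n x, gradient V x⟫ = -ρ x)
    (hVf : ∀ x ∈ Γ, lap V x = -(fP x - fM x))
    -- the regular part `w`:
    (w : EuclideanSpace ℝ (Fin d) → ℝ)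
    (hw : ContDiffOn ℝ 2 w (Ωm ∪ Ωp))
    (hwval : ∀ x ∈ Γ, ∃ wx : ℝ,
      Tendsto w (𝓝[Ωp] x) (𝓝 wx) ∧ Tendsto w (𝓝[Ωm] x) (𝓝 wx))
    (hwgrad : ∀ x ∈ Γ, ∃ gx : EuclideanSpace ℝ (Fin d),
      Tendsto (gradient w) (𝓝[Ωp] x) (𝓝 gx) ∧ Tendsto (gradient w) (𝓝[Ωm] x) (𝓝 gx))
    (hwm : ∀ x ∈ Ωm, lap w x = f x - lap V x)
    (hwp : ∀ x ∈ Ωp, lap w x = f x)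
    (hwb : ∀ x ∈ frontier Ω, Tendsto w (𝓝[Ω] x) (𝓝 (u_b x)))
    -- the full solution `u`:
    (u : EuclideanSpace ℝ (Fin d) → ℝ)
    (hu : u = fun x => w x + Set.indicator Ωm V x) :
    -- (i) `Δu = f` on `Ω⁻ ∪ Ω⁺`
    (∀ x ∈ Ωm ∪ Ωp, lap u x = f x) ∧
    -- (ii) `[[u]] = γ` and `[[n·∇u]] = ρ` on `Γ`
    (∀ x ∈ Γ, ∃ up um : ℝ,
      Tendsto u (𝓝[Ωp] x) (𝓝 up) ∧ Tendsto u (𝓝[Ωm] x) (𝓝 um) ∧ up - um = γ x) ∧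
    (∀ x ∈ Γ, ∃ ap am : ℝ,
      Tendsto (fun y => ⟪n x, gradient u y⟫) (𝓝[Ωp] x) (𝓝 ap) ∧
      Tendsto (fun y => ⟪n x, gradient u y⟫) (𝓝[Ωm] x) (𝓝 am) ∧ ap - am = ρ x) ∧
    -- (iii) `u = u_b` on `∂Ω`
    (∀ x ∈ frontier Ω, Tendsto u (𝓝[Ω] x) (𝓝 (u_b x))) :=
  hybrid_method_correctness_general Ω Ωm Ωp Γ hΩ hΩm hΩmΩ hΩp n f γ ρ u_b V hV hVγ hVρ w hw hwval
    hwgrad hwm hwp hwb u hu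
end

section
/- Fix n ≥ 1 and set h = 1/(n+1) and xᵢ = i·h for 1 ≤ i ≤ n. Let A be the n×n matrix with Aᵢᵢ = 2/h², A_{i,i+1} = A_{i+1,i} = −1/h², and all other entries 0. Let C₁, C₂ ≥ 0, let S ⊆ {1,…,n} with |S| ≤ K, and suppose e, r ∈ ℝⁿ satisfy A·e = r with |rᵢ| ≤ C₂·h for i ∈ S and |rᵢ| ≤ C₁·h² for i ∉ S. Then max_{1 ≤ i ≤ n} |eᵢ| ≤ (C₁/8 + K·C₂/4)·h². In particular, an O(h) local truncation error confined to a bounded number K of grid points, together with O(h²) truncation error elsewhere, yields an O(h²) global error in the maximum norm. -/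
/-!
The scaled matrix `h² A` is the second-difference matrix `T = tridiag(-1, 2, -1)`, whose inverse
is the discrete Green's function `G i j = min(i, j) (N - max(i, j)) / N` with `N = n + 1`
(1-indexed): each column of `G` is a tent, piecewise linear with a kink of size one at the
diagonal. Hence `e = h² G r`, and `G` is entrywise nonnegative, bounded by `N / 4`, with row sums
`i (N - i) / 2 ≤ N² / 8`. Splitting `h² ∑ⱼ G i j |r j|` over `S` and its complement gives
`h² (N² / 8 · C₁ h² + |S| · N / 4 · C₂ h)`, which is the claimed bound since `h N = 1`.
-/

open Matrix Finset

def secondDiff (n : ℕ) : Matrix (Fin n) (Fin n) ℝ := fun i j =>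
  if i = j then 2 else if (i : ℕ) + 1 = j ∨ (j : ℕ) + 1 = i then -1 else 0

lemma secondDiff_mulVec (n : ℕ) (φ : ℕ → ℝ) (h0 : φ 0 = 0) (hn : φ (n + 1) = 0) (i : Fin n) :
    (secondDiff n *ᵥ fun k => φ (k + 1)) i = 2 * φ (i + 1) - φ i - φ (i + 2) := by
  have hterm (m k : ℕ) : (if m = k then (2 : ℝ) else if m + 1 = k ∨ k + 1 = m then -1 else 0)
      * φ (k + 1) = (if k = m then 2 * φ (m + 1) else 0) + (if k + 1 = m then -φ m else 0)
        + (if k = m + 1 then -φ (m + 2) else 0) := by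
    split_ifs <;> subst_vars <;> first | omega | ring
  simp only [mulVec, dotProduct, secondDiff, Fin.ext_iff]
  rw [Fin.sum_univ_eq_sum_range (fun k => (if (i : ℕ) = k then (2 : ℝ)
      else if (i : ℕ) + 1 = k ∨ k + 1 = i then -1 else 0) * φ (k + 1)),
    sum_congr rfl fun k _ => hterm i k, sum_add_distrib, sum_add_distrib,
    sum_ite_eq', sum_ite_eq', if_pos (mem_range.2 i.isLt)]
  have hleft : ∑ k ∈ range n, (if k + 1 = (i : ℕ) then -φ i else 0) = -φ i := by
    rcases Nat.eq_zero_or_eq_succ_pred (i : ℕ) with hi | hi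
    · simp [hi, h0]
    · rw [hi]; simp only [Nat.succ_inj, sum_ite_eq']; rw [if_pos (mem_range.2 (by omega))]
  have hright : (if (i : ℕ) + 1 ∈ range n then -φ (i + 2) else 0) = -φ (i + 2) := by
    split_ifs with hi
    · rfl
    · rw [show (i : ℕ) + 2 = n + 1 by simp at hi; omega, hn, neg_zero]
  rw [hleft, hright]; ring

def tent (N a k : ℕ) : ℝ := (min a k : ℕ) * ((N : ℝ) - (max a k : ℕ))

lemma tent_comm (N a k : ℕ) : tent N a k = tent N k a := by
  rw [tent, tent, min_comm, max_comm]

lemma tent_zero_right (N a : ℕ) : tent N a 0 = 0 := by simp [tent]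

lemma tent_self_right {N a : ℕ} (ha : a ≤ N) : tent N a N = 0 := by
  simp [tent, max_eq_right ha]

lemma tent_nonneg {N a k : ℕ} (ha : a ≤ N) (hk : k ≤ N) : 0 ≤ tent N a k := by
  have : ((max a k : ℕ) : ℝ) ≤ N := by exact_mod_cast max_le ha hk
  unfold tent; exact mul_nonneg (Nat.cast_nonneg _) (by linarith)

lemma tent_le (N a k : ℕ) : tent N a k ≤ (N : ℝ) ^ 2 / 4 := by
  have hmM : ((min a k : ℕ) : ℝ) ≤ (max a k : ℕ) := by exact_mod_cast min_le_max
  have hm : (0 : ℝ) ≤ (min a k : ℕ) := Nat.cast_nonneg _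
  unfold tent
  nlinarith [sq_nonneg ((N : ℝ) - 2 * (min a k : ℕ))]

lemma tent_secondDiff (N a j : ℕ) :
    2 * tent N a (j + 1) - tent N a j - tent N a (j + 2) = if a = j + 1 then (N : ℝ) else 0 := by
  rcases lt_trichotomy a (j + 1) with h | rfl | h
  · simp only [tent, min_eq_left (by omega : a ≤ j), max_eq_right (by omega : a ≤ j),
      min_eq_left h.le, max_eq_right h.le, min_eq_left (by omega : a ≤ j + 2),
      max_eq_right (by omega : a ≤ j + 2), if_neg h.ne]
    push_cast; ring
  · simp [tent]; ring
  · simp only [tent, min_eq_right (by omega : j ≤ a), max_eq_left (by omega : j ≤ a),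
      min_eq_right h.le, max_eq_left h.le, min_eq_right (by omega : j + 2 ≤ a),
      max_eq_left (by omega : j + 2 ≤ a), if_neg h.ne']
    push_cast; ring

/-- Index `i : Fin n` stands for the grid point `i + 1`. -/
noncomputable def greenMatrix (n : ℕ) : Matrix (Fin n) (Fin n) ℝ := fun i j =>
  tent (n + 1) (i + 1) (j + 1) / (n + 1)

lemma secondDiff_mul_greenMatrix (n : ℕ) : secondDiff n * greenMatrix n = 1 := by
  ext i j
  have hcol := secondDiff_mulVec n (fun k => tent (n + 1) (j + 1) k / (n + 1))
    (by simp [tent_zero_right]) (by simp [tent_self_right (by omega : (j : ℕ) + 1 ≤ n + 1)]) i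
  simp only [← sub_div, ← mul_div_assoc, tent_secondDiff] at hcol
  rw [mul_apply, one_apply]
  convert hcol using 1
  · simp only [greenMatrix, mulVec, dotProduct, tent_comm _ _ ((j : ℕ) + 1)]
  · by_cases hij : i = j
    · simp [hij]; field_simp
    · simp [hij, Ne.symm (Fin.val_ne_of_ne hij)]

lemma greenMatrix_mul_secondDiff (n : ℕ) : greenMatrix n * secondDiff n = 1 :=
  mul_eq_one_comm.mp (secondDiff_mul_greenMatrix n)

lemma greenMatrix_nonneg (n : ℕ) (i j : Fin n) : 0 ≤ greenMatrix n i j :=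
  div_nonneg (tent_nonneg (by omega) (by omega)) (by positivity)

lemma greenMatrix_le (n : ℕ) (i j : Fin n) : greenMatrix n i j ≤ ((n : ℝ) + 1) / 4 := by
  have hN : (0 : ℝ) < n + 1 := by positivity
  rw [greenMatrix, div_le_iff₀ hN]
  have := tent_le (n + 1) (i + 1) (j + 1)
  push_cast at this
  linarith

lemma sum_greenMatrix_row (n : ℕ) (i : Fin n) :
    ∑ j, greenMatrix n i j = ((i : ℝ) + 1) * (n - i) / 2 := by
  -- `u` vanishes at `0` and `n + 1` and has second difference `1`, so `G 1 = G (T u) = u`.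
  set u : ℕ → ℝ := fun k => (k : ℝ) * ((n + 1 : ℕ) - k) / 2
  have hu : (secondDiff n *ᵥ fun k => u (k + 1)) = 1 := by
    ext k
    rw [secondDiff_mulVec n u (by simp [u]) (by simp [u]) k]
    simp only [u, Pi.one_apply]; push_cast; ring
  have := congrFun (congrArg (greenMatrix n *ᵥ ·) hu) i
  rw [mulVec_mulVec, greenMatrix_mul_secondDiff, one_mulVec] at this
  simp only [mulVec, dotProduct, Pi.one_apply, mul_one] at this
  rw [← this]; simp only [u]; push_cast; ring

lemma sum_greenMatrix_row_le (n : ℕ) (i : Fin n) :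
    ∑ j, greenMatrix n i j ≤ ((n : ℝ) + 1) ^ 2 / 8 := by
  rw [sum_greenMatrix_row]
  nlinarith [sq_nonneg ((n : ℝ) + 1 - 2 * ((i : ℝ) + 1))]

lemma abs_dotProduct_le_of_localized_bound {ι : Type*} [Fintype ι] {w r : ι → ℝ} {S : Finset ι}
    {M R a b : ℝ} (hw : ∀ k, 0 ≤ w k) (hwM : ∀ k, w k ≤ M) (hwR : ∑ k, w k ≤ R) (ha : 0 ≤ a)
    (hrS : ∀ k ∈ S, |r k| ≤ b) (hrO : ∀ k ∉ S, |r k| ≤ a) :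
    |w ⬝ᵥ r| ≤ R * a + #S * (M * b) := by
  classical
  have hS : ∑ k ∈ S, w k * |r k| ≤ #S * (M * b) := by
    rw [← nsmul_eq_mul, ← sum_const]
    refine sum_le_sum fun k hk => mul_le_mul (hwM k) (hrS k hk) (abs_nonneg _) ?_
    exact (hw k).trans (hwM k)
  have hO : ∑ k ∈ Sᶜ, w k * |r k| ≤ R * a :=
    calc ∑ k ∈ Sᶜ, w k * |r k| ≤ ∑ k ∈ Sᶜ, w k * a :=
          sum_le_sum fun k hk => mul_le_mul_of_nonneg_left (hrO k (mem_compl.1 hk)) (hw k)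
      _ ≤ ∑ k, w k * a :=
          sum_le_sum_of_subset_of_nonneg (subset_univ _) fun k _ _ => mul_nonneg (hw k) ha
      _ ≤ R * a := by rw [← sum_mul]; exact mul_le_mul_of_nonneg_right hwR ha
  calc |w ⬝ᵥ r| ≤ ∑ k, w k * |r k| := by
        refine (abs_sum_le_sum_abs _ _).trans_eq (sum_congr rfl fun k _ => ?_)
        rw [abs_mul, abs_of_nonneg (hw k)]
    _ = ∑ k ∈ S, w k * |r k| + ∑ k ∈ Sᶜ, w k * |r k| := (sum_add_sum_compl S _).symm
    _ ≤ R * a + #S * (M * b) := by linarith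

theorem global_error_from_localized_truncation_error_general (n : ℕ)
    (h : ℝ) (hh : h = 1 / (n + 1))
    (A : Matrix (Fin n) (Fin n) ℝ)
    (hA : ∀ i j : Fin n, A i j =
      if i = j then 2 / h ^ 2
      else if (i : ℕ) + 1 = (j : ℕ) ∨ (j : ℕ) + 1 = (i : ℕ) then -1 / h ^ 2
      else 0)
    (C₁ C₂ : ℝ) (hC₁ : 0 ≤ C₁) (hC₂ : 0 ≤ C₂)
    (K : ℕ) (S : Finset (Fin n)) (hS : S.card ≤ K)
    (e r : Fin n → ℝ) (her : A.mulVec e = r)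
    (hrS : ∀ i ∈ S, |r i| ≤ C₂ * h)
    (hrO : ∀ i ∉ S, |r i| ≤ C₁ * h ^ 2) :
    ∀ i : Fin n, |e i| ≤ (C₁ / 8 + K * C₂ / 4) * h ^ 2 := by
  intro i
  have hhN : h * (n + 1) = 1 := by rw [hh]; field_simp
  have hh0 : h ^ 2 ≠ 0 := by rw [hh]; positivity
  have hA' : A = (h ^ 2)⁻¹ • secondDiff n := by
    ext k l
    rw [hA, Matrix.smul_apply, secondDiff, smul_eq_mul]
    split_ifs <;> ring
  have he : e = h ^ 2 • (greenMatrix n *ᵥ r) := by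
    rw [← her, hA', smul_mulVec, mulVec_smul, mulVec_mulVec, greenMatrix_mul_secondDiff,
      one_mulVec, smul_smul, mul_inv_cancel₀ hh0, one_smul]
  have hGr := abs_dotProduct_le_of_localized_bound (greenMatrix_nonneg n i) (greenMatrix_le n i)
    (sum_greenMatrix_row_le n i) (by positivity : 0 ≤ C₁ * h ^ 2) hrS hrO
  rw [he, Pi.smul_apply, smul_eq_mul, abs_mul, abs_of_nonneg (sq_nonneg h)]
  calc h ^ 2 * |(greenMatrix n *ᵥ r) i|
      ≤ h ^ 2 * (((n : ℝ) + 1) ^ 2 / 8 * (C₁ * h ^ 2) + #S * (((n : ℝ) + 1) / 4 * (C₂ * h))) :=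
        mul_le_mul_of_nonneg_left hGr (sq_nonneg h)
    _ = (C₁ / 8 + #S * C₂ / 4) * h ^ 2 := by
        linear_combination (C₁ * h ^ 2 / 8 * (h * (n + 1) + 1) + #S * C₂ * h ^ 2 / 4) * hhN
    _ ≤ (C₁ / 8 + K * C₂ / 4) * h ^ 2 := by gcongr

/-- **O(h) truncation error at finitely many points yields O(h²) global error.**
Let `A` be the standard three-point finite-difference matrix for `-d²/dx²` on `(0,1)` with
mesh size `h = 1/(n+1)` and homogeneous Dirichlet boundary conditions. If `A·e = r` where
`|rᵢ| ≤ C₂·h` on a set `S` of at most `K` indices and `|rᵢ| ≤ C₁·h²` elsewhere, then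
`|eᵢ| ≤ (C₁/8 + K·C₂/4)·h²` for every `i`. -/
theorem global_error_from_localized_truncation_error (n : ℕ) (hn : 1 ≤ n)
    (h : ℝ) (hh : h = 1 / (n + 1))
    (A : Matrix (Fin n) (Fin n) ℝ)
    (hA : ∀ i j : Fin n, A i j =
      if i = j then 2 / h ^ 2
      else if (i : ℕ) + 1 = (j : ℕ) ∨ (j : ℕ) + 1 = (i : ℕ) then -1 / h ^ 2
      else 0)
    (C₁ C₂ : ℝ) (hC₁ : 0 ≤ C₁) (hC₂ : 0 ≤ C₂)
    (K : ℕ) (S : Finset (Fin n)) (hS : S.card ≤ K)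
    (e r : Fin n → ℝ) (her : A.mulVec e = r)
    (hrS : ∀ i ∈ S, |r i| ≤ C₂ * h)
    (hrO : ∀ i ∉ S, |r i| ≤ C₁ * h ^ 2) :
    ∀ i : Fin n, |e i| ≤ (C₁ / 8 + K * C₂ / 4) * h ^ 2 :=
  global_error_from_localized_truncation_error_general n h hh A hA C₁ C₂ hC₁ hC₂ K S hS e r her hrS
    hrO
end
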